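/- arXiv:0806.2787 — 7 statements merged into one kernel-verified Lean document; each statement's English description precedes it below -/
import Mathlib

section
/- No block move decreases the number of descents of a permutation by more than two. That is, if p' is obtained from a permutation p of length n by interchanging two disjoint blocks of consecutive entries (keeping the order of entries within each block and the order of the blocks' surroundings), then des(p') ≥ des(p) - 2. -/
/-- Number of descents of a list (one-line notation). -/
def desNum (p : List ℕ) : ℕ :=
  ((Finset.range (p.length - 1)).filter (fun i => p.getD (i+1) 0 < p.getD i 0)).card

/-- The extension of `p` by a leading `0` and trailing `n+1`. -/
def extList (p : List ℕ) : List ℕ := 0 :: (p ++ [p.length + 1])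

/-- Number of bad pairs of `p`. -/
def badNum (p : List ℕ) : ℕ :=
  ((Finset.range (p.length + 1)).filter
    (fun i => (extList p).getD i 0 + 1 ≠ (extList p).getD (i+1) 0)).card

/-- `q` is obtained from `p` by one block move: interchanging two disjoint
nonempty blocks of consecutive entries. -/
def IsBlockMove (p q : List ℕ) : Prop :=
  ∃ A X B Y C : List ℕ, X ≠ [] ∧ Y ≠ [] ∧
    p = A ++ X ++ B ++ Y ++ C ∧ q = A ++ Y ++ B ++ X ++ C

/-- `p` is a permutation of `{1,…,n}` in one-line notation. -/
def IsPermList (p : List ℕ) : Prop := p.Perm (List.range' 1 p.length)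

/-- `p` can be sorted to the identity `1 2 … n` using at most `k` block moves. -/
def SortableIn (p : List ℕ) (k : ℕ) : Prop :=
  ∃ m ≤ k, ∃ f : ℕ → List ℕ, f 0 = p ∧ f m = List.range' 1 p.length ∧
    ∀ i < m, IsBlockMove (f i) (f (i+1))

/-!
Cut the permutation as `A X B Y C`. Descents inside the five pieces survive the move, so only
the descents at the seams between consecutive pieces change. The seams of `A X B Y C` fall into
two pairs, `(A|X, B|Y)` and `(X|B, Y|C)`: if both seams of a pair are descents, one of the two
corresponding seams of `A Y B X C` is a descent too, since otherwise the four endpoints would form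
a cycle `x < a ≤ y < b ≤ x`. Each pair therefore loses at most one descent. When `B` is empty the
three seams `A|X, X|Y, Y|C` cannot all be descents while `A|Y, Y|X, X|C` are all ascents, for the
same reason.
-/

section Descents

variable {α : Type*} [LinearOrder α]

def descentCount : List α → ℕ
  | a :: b :: t => (if b < a then 1 else 0) + descentCount (b :: t)
  | _ => 0

def HasSeamDescent (u v : List α) : Prop :=
  ∃ a ∈ u.getLast?, ∃ b ∈ v.head?, b < a

instance (u v : List α) : Decidable (HasSeamDescent u v) := by
  unfold HasSeamDescent; infer_instance

def seamDescent (u v : List α) : ℕ := if HasSeamDescent u v then 1 else 0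

@[simp]
theorem seamDescent_nil_left (v : List α) : seamDescent [] v = 0 := by
  simp [seamDescent, HasSeamDescent]

@[simp]
theorem seamDescent_nil_right (u : List α) : seamDescent u [] = 0 := by
  simp [seamDescent, HasSeamDescent]

theorem seamDescent_append_right (u : List α) {v : List α} (hv : v ≠ []) (w : List α) :
    seamDescent u (v ++ w) = seamDescent u v := by
  simp only [seamDescent, HasSeamDescent, List.head?_append_of_ne_nil _ hv]

theorem descentCount_append : ∀ u v : List α,
    descentCount (u ++ v) = descentCount u + descentCount v + seamDescent u v
  | [], v => by simp [descentCount]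
  | [a], [] => by simp [descentCount]
  | [a], b :: v => by simp [descentCount, seamDescent, HasSeamDescent]; omega
  | a :: b :: u, v => by
    simp only [List.cons_append, descentCount]
    rw [← List.cons_append, descentCount_append (b :: u) v]
    simp only [seamDescent, HasSeamDescent, List.getLast?_cons_cons]
    omega

theorem HasSeamDescent.cross {A X B Y : List α} (hAX : HasSeamDescent A X)
    (hBY : HasSeamDescent B Y) : HasSeamDescent A Y ∨ HasSeamDescent B X := by
  obtain ⟨a, ha, x, hx, hxa⟩ := hAX
  obtain ⟨b, hb, y, hy, hyb⟩ := hBY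
  rcases lt_or_ge y a with hya | hay
  · exact .inl ⟨a, ha, y, hy, hya⟩
  · exact .inr ⟨b, hb, x, hx, (hxa.trans_le hay).trans hyb⟩

theorem HasSeamDescent.rotate {A X Y C : List α} (hAX : HasSeamDescent A X)
    (hXY : HasSeamDescent X Y) (hYC : HasSeamDescent Y C) :
    HasSeamDescent A Y ∨ HasSeamDescent Y X ∨ HasSeamDescent X C := by
  obtain ⟨a, ha, x₁, hx₁, hx₁a⟩ := hAX
  obtain ⟨xₖ, hxₖ, y₁, hy₁, hy₁xₖ⟩ := hXY
  obtain ⟨yₗ, hyₗ, c, hc, hcyₗ⟩ := hYC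
  rcases lt_or_ge y₁ a with hy₁a | hay₁
  · exact .inl ⟨a, ha, y₁, hy₁, hy₁a⟩
  rcases lt_or_ge x₁ yₗ with hx₁yₗ | hyₗx₁
  · exact .inr (.inl ⟨yₗ, hyₗ, x₁, hx₁, hx₁yₗ⟩)
  exact .inr (.inr ⟨xₖ, hxₖ, c, hc, by order⟩)

theorem seamDescent_add_seamDescent_le (A X B Y : List α) :
    seamDescent A X + seamDescent B Y ≤ seamDescent A Y + seamDescent B X + 1 := by
  have := @HasSeamDescent.cross _ _ A X B Y
  unfold seamDescent
  split_ifs <;> first | omega | tauto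

theorem seamDescent_rotate_le (A X Y C : List α) :
    seamDescent A X + seamDescent X Y + seamDescent Y C ≤
      seamDescent A Y + seamDescent Y X + seamDescent X C + 2 := by
  have := @HasSeamDescent.rotate _ _ A X Y C
  unfold seamDescent
  split_ifs <;> first | omega | tauto

theorem descentCount_swap_blocks_le (A X B Y C : List α) (hX : X ≠ []) (hY : Y ≠ []) :
    descentCount (A ++ X ++ B ++ Y ++ C) ≤ descentCount (A ++ Y ++ B ++ X ++ C) + 2 := by
  by_cases hB : B = []
  · subst hB
    simp only [List.append_nil, List.append_assoc, descentCount_append,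
      seamDescent_append_right _ hX, seamDescent_append_right _ hY]
    have := seamDescent_rotate_le A X Y C
    omega
  · simp only [List.append_assoc, descentCount_append, seamDescent_append_right _ hX,
      seamDescent_append_right _ hY, seamDescent_append_right _ hB]
    have := seamDescent_add_seamDescent_le A X B Y
    have := seamDescent_add_seamDescent_le X B Y C
    omega

end Descents

theorem desNum_eq_descentCount : ∀ p : List ℕ, desNum p = descentCount p
  | [] => by simp [desNum, descentCount]
  | [a] => by simp [desNum, descentCount]
  | a :: b :: t => by
    rw [descentCount, ← desNum_eq_descentCount (b :: t)]
    simp only [desNum, List.length_cons, Nat.add_sub_cancel, Finset.card_filter,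
      Finset.sum_range_succ', List.getD_cons_succ, List.getD_cons_zero]
    omega

theorem blockMove_descents_general (p q : List ℕ)
    (h : IsBlockMove p q) : desNum p ≤ desNum q + 2 := by
  obtain ⟨A, X, B, Y, C, hX, hY, rfl, rfl⟩ := h
  simpa only [desNum_eq_descentCount] using descentCount_swap_blocks_le A X B Y C hX hY

/-- No block move decreases the number of descents by more than two. -/
theorem blockMove_descents (p q : List ℕ) (hp : IsPermList p)
    (h : IsBlockMove p q) : desNum p ≤ desNum q + 2 :=
  blockMove_descents_general p q h
end

section
/- The decreasing permutation n (n-1) ... 2 1 can be sorted using exactly ⌈(n-1)/2⌉ block moves: this many suffice, and no fewer suffice (for n ≥ 2). -/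
/-!
A block move `A X B Y C ↦ A Y B X C` keeps the descents inside the five blocks and changes only
the four junctions. Comparing the eight entries at the block ends shows that the junctions of
`A X B Y C` carry at most two more descents than those of `A Y B X C`, so a move removes at most
two descents.
The decreasing permutation has `n - 1` descents and the identity none, hence at least
`⌈(n - 1) / 2⌉ = ⌊n / 2⌋` moves are needed. They suffice: in `1 … k | k+m … k+1 | k+m+1 … 2k+m`,
swapping the two ends of the reversed middle segment sorts two more entries.
-/

def descents : List ℕ → ℕ
  | a :: b :: l => (if b < a then 1 else 0) + descents (b :: l)
  | _ => 0

/-- Descent indicator at the junction of two blocks, given the last entry of the first and the first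
entry of the second; `none` stands for an empty block. -/
def junctionDescent : Option ℕ → Option ℕ → ℕ
  | some a, some b => if b < a then 1 else 0
  | _, _ => 0

lemma descents_append (u v : List ℕ) :
    descents (u ++ v) = descents u + junctionDescent u.getLast? v.head? + descents v := by
  induction u with
  | nil => simp [descents, junctionDescent]
  | cons a u ih =>
    cases u with
    | nil => cases v <;> simp [descents, junctionDescent]
    | cons b u =>
      simp only [List.cons_append, descents] at ih ⊢
      rw [ih, List.getLast?_cons_cons]
      omega

/-- The junctions of `A X B Y C` carry at most two more descents than those of `A Y B X C`, where
`a` is the last entry of `A`, `c` the first of `C`, and `b₁`, `bₗ`, `x₁`, `xₗ`, `y₁`, `yₗ` are the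
ends of `B`, `X`, `Y`. -/
lemma junctionDescents_blockMove (a c b₁ bₗ : Option ℕ) (x₁ xₗ y₁ yₗ : ℕ)
    (hB : b₁.isSome = bₗ.isSome) :
    junctionDescent a x₁ + junctionDescent xₗ b₁ + junctionDescent (bₗ.or xₗ) y₁ +
        junctionDescent yₗ c ≤
      junctionDescent a y₁ + junctionDescent yₗ b₁ + junctionDescent (bₗ.or yₗ) x₁ +
        junctionDescent xₗ c + 2 := by
  cases b₁ <;> cases bₗ <;>
    simp only [Option.isSome_none, Option.isSome_some, reduceCtorEq] at hB <;>
    cases a <;> cases c <;>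
    simp only [junctionDescent, Option.none_or, Option.some_or] <;> split_ifs <;> omega

lemma descents_le_of_isBlockMove {p q : List ℕ} (h : IsBlockMove p q) :
    descents p ≤ descents q + 2 := by
  obtain ⟨A, X, B, Y, C, hX, hY, rfl, rfl⟩ := h
  obtain ⟨x₁, hx₁⟩ := Option.isSome_iff_exists.mp (List.isSome_head?.mpr hX)
  obtain ⟨xₗ, hxₗ⟩ := Option.isSome_iff_exists.mp (List.getLast?_isSome.mpr hX)
  obtain ⟨y₁, hy₁⟩ := Option.isSome_iff_exists.mp (List.isSome_head?.mpr hY)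
  obtain ⟨yₗ, hyₗ⟩ := Option.isSome_iff_exists.mp (List.getLast?_isSome.mpr hY)
  have hB : B.head?.isSome = B.getLast?.isSome := by
    rw [Bool.eq_iff_iff, List.isSome_head?, List.getLast?_isSome]
  have := junctionDescents_blockMove A.getLast? C.head? B.head? B.getLast? x₁ xₗ y₁ yₗ hB
  simp only [descents_append, List.getLast?_append, hx₁, hxₗ, hy₁, hyₗ, Option.some_or] at this ⊢
  omega

lemma descents_range' (s n : ℕ) : descents (List.range' s n) = 0 := by
  induction n generalizing s with
  | zero => rfl
  | succ n ih =>
    cases n with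
    | zero => rfl
    | succ n => simpa [List.range'_succ, descents] using ih (s + 1)

lemma reverse_range'_succ (s n : ℕ) :
    (List.range' s (n + 1)).reverse = (s + n) :: (List.range' s n).reverse := by
  simp [List.range'_1_concat]

lemma descents_reverse_range' (s n : ℕ) : descents (List.range' s n).reverse = n - 1 := by
  induction n with
  | zero => rfl
  | succ n ih =>
    cases n with
    | zero => rfl
    | succ n =>
      rw [reverse_range'_succ] at ih
      rw [reverse_range'_succ, reverse_range'_succ, descents, ih, if_pos (by omega)]
      omega

lemma IsBlockMove.length_eq {p q : List ℕ} (h : IsBlockMove p q) : q.length = p.length := by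
  obtain ⟨A, X, B, Y, C, -, -, rfl, rfl⟩ := h
  simp only [List.length_append]
  omega

lemma sortableIn_range' (n : ℕ) : SortableIn (List.range' 1 n) 0 :=
  ⟨0, le_rfl, fun _ => List.range' 1 n, rfl, by rw [List.length_range'], by simp⟩

lemma SortableIn.of_isBlockMove {p q : List ℕ} {k : ℕ} (h : IsBlockMove p q)
    (hq : SortableIn q k) : SortableIn p (k + 1) := by
  obtain ⟨m, hmk, f, hf0, hfm, hf⟩ := hq
  refine ⟨m + 1, by omega, fun i => if i = 0 then p else f (i - 1), by simp, ?_, ?_⟩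
  · simpa [h.length_eq] using hfm
  · rintro (_ | i) hi
    · simpa [hf0] using h
    · simpa using hf i (by omega)

lemma SortableIn.descents_le {p : List ℕ} {k : ℕ} (h : SortableIn p k) :
    descents p ≤ 2 * k := by
  obtain ⟨m, hmk, f, rfl, hfm, hf⟩ := h
  have hchain : ∀ i ≤ m, descents (f 0) ≤ descents (f i) + 2 * i := by
    intro i
    induction i with
    | zero => simp
    | succ i ih =>
      intro hi
      have := descents_le_of_isBlockMove (hf i (by omega))
      have := ih (by omega)
      omega
  have := hchain m le_rfl
  rw [hfm, descents_range'] at this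
  omega

def reversedMiddle (k m : ℕ) : List ℕ :=
  List.range' 1 k ++ (List.range' (k + 1) m).reverse ++ List.range' (k + m + 1) k

lemma reversedMiddle_zero (n : ℕ) : reversedMiddle 0 n = (List.range' 1 n).reverse := by
  simp [reversedMiddle]

lemma reversedMiddle_of_le_one {k m : ℕ} (hm : m ≤ 1) :
    reversedMiddle k m = List.range' 1 (2 * k + m) := by
  have hrev : (List.range' (k + 1) m).reverse = List.range' (k + 1) m := by
    interval_cases m <;> rfl
  rw [reversedMiddle, hrev, show k + m + 1 = 1 + (k + m) by omega, show k + 1 = 1 + k by omega,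
    List.range'_append_1, List.range'_append_1]
  congr 1
  omega

lemma isBlockMove_reversedMiddle (k m : ℕ) :
    IsBlockMove (reversedMiddle k (m + 2)) (reversedMiddle (k + 1) m) := by
  refine ⟨List.range' 1 k, [k + m + 2], (List.range' (k + 2) m).reverse, [k + 1],
    List.range' (k + m + 3) k, by simp, by simp, ?_, ?_⟩
  · have hmid : List.range' (k + 1) (m + 2) = [k + 1] ++ List.range' (k + 2) m ++ [k + m + 2] := by
      rw [List.range'_succ, List.range'_1_concat, show k + 1 + 1 + m = k + m + 2 by omega]
      rfl
    simp [reversedMiddle, hmid, show k + (m + 2) + 1 = k + m + 3 by omega]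
  · rw [reversedMiddle, List.range'_1_concat, List.range'_succ, show 1 + k = k + 1 by omega,
      show k + 1 + m + 1 = k + m + 2 by omega]
    simp

lemma sortableIn_reversedMiddle (k m : ℕ) : SortableIn (reversedMiddle k m) (m / 2) := by
  induction m using Nat.strong_induction_on generalizing k with
  | _ m ih =>
    rcases Nat.lt_or_ge m 2 with hm | hm
    · rw [reversedMiddle_of_le_one (by omega), show m / 2 = 0 by omega]
      exact sortableIn_range' _
    · obtain ⟨m, rfl⟩ := Nat.exists_eq_add_of_le' hm
      rw [show (m + 2) / 2 = m / 2 + 1 by omega]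
      exact (ih m (by omega) (k + 1)).of_isBlockMove (isBlockMove_reversedMiddle k m)

theorem decreasing_exact_general (n : ℕ) :
    SortableIn (List.range' 1 n).reverse (n / 2) ∧
    ∀ k, SortableIn (List.range' 1 n).reverse k → n / 2 ≤ k := by
  refine ⟨reversedMiddle_zero n ▸ sortableIn_reversedMiddle 0 n, fun k hk => ?_⟩
  have := hk.descents_le
  rw [descents_reverse_range'] at this
  omega

/-- The decreasing permutation needs exactly `⌈(n-1)/2⌉` block moves. -/
theorem decreasing_exact (n : ℕ) (hn : 2 ≤ n) :
    SortableIn (List.range' 1 n).reverse (n / 2) ∧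
    ∀ k, SortableIn (List.range' 1 n).reverse k → n / 2 ≤ k :=
  decreasing_exact_general n
end

section
/- If p is a permutation of length n that is not the increasing permutation, then there exists a block move that decreases the number of bad pairs of p by at least two. -/
/-!
Let `1, …, k` be the longest sorted prefix of `p`, so that `p = 1 … k E (k+1) G` with `E`
nonempty and every entry of `E` larger than `k + 1`. Let `u` be the least entry of `E`, and split
`E = X u B`; then `w = u - 1` comes after `E`, and let `Y` be the segment from `k + 1` to `w`.
Interchanging `X` and `Y` (or `u B` and `Y` when `X` is empty) turns `p` into
`1 … k Y u B X …`: the new pairs `(k, k+1)` and `(w, u)` are good, while all three or four cut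
points of the move were bad pairs of `p`, and at most two new bad pairs appear.
-/

open List
open scoped Finset

def badPairs : List ℕ → ℕ
  | a :: b :: l => (if a + 1 = b then 0 else 1) + badPairs (b :: l)
  | _ => 0

def badLink (L M : List ℕ) : ℕ :=
  match L.getLast?, M.head? with
  | some a, some b => if a + 1 = b then 0 else 1
  | _, _ => 0

@[simp]
lemma badLink_nil_left (M : List ℕ) : badLink [] M = 0 := rfl

@[simp]
lemma badLink_nil_right (L : List ℕ) : badLink L [] = 0 := by
  unfold badLink; split <;> simp_all

lemma badLink_le_one (L M : List ℕ) : badLink L M ≤ 1 := by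
  unfold badLink; split <;> (try split) <;> simp

lemma badLink_eq_zero {L M : List ℕ} {a : ℕ} (ha : L.getLast? = some a)
    (hb : M.head? = some (a + 1)) : badLink L M = 0 := by
  simp [badLink, ha, hb]

lemma badLink_eq_one {L M : List ℕ} {a b : ℕ} (ha : L.getLast? = some a)
    (hb : M.head? = some b) (h : a + 1 ≠ b) : badLink L M = 1 := by
  simp [badLink, ha, hb, h]

lemma badLink_append_right (L : List ℕ) {M : List ℕ} (hM : M ≠ []) (N : List ℕ) :
    badLink L (M ++ N) = badLink L M := by
  simp [badLink, head?_append, head?_eq_some_head hM]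

lemma badLink_append_left {L : List ℕ} (M : List ℕ) (hL : L ≠ []) (N : List ℕ) :
    badLink (M ++ L) N = badLink L N := by
  simp [badLink, getLast?_append, getLast?_eq_some_getLast hL]

lemma badPairs_cons_cons (a b : ℕ) (l : List ℕ) :
    badPairs (a :: b :: l) = badLink [a] (b :: l) + badPairs (b :: l) := by
  simp [badPairs, badLink]

lemma badPairs_append (L M : List ℕ) :
    badPairs (L ++ M) = badPairs L + badLink L M + badPairs M := by
  induction L with
  | nil => simp [badPairs]
  | cons a L ih =>
    rcases L with _ | ⟨b, L⟩
    · rcases M with _ | ⟨b, M⟩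
      · simp [badPairs]
      · simp [badPairs_cons_cons, badPairs]
    · rw [cons_append, cons_append, badPairs_cons_cons, ← cons_append, ih, badPairs_cons_cons]
      simp only [badLink, head?_cons, cons_append, getLast?_singleton, getLast?_cons_cons]
      omega

lemma badPairs_eq_card_filter (l : List ℕ) :
    badPairs l = #{i ∈ Finset.range (l.length - 1) | l.getD i 0 + 1 ≠ l.getD (i + 1) 0} := by
  induction l with
  | nil => rfl
  | cons a l ih =>
    rcases l with _ | ⟨b, l⟩
    · rfl
    · rw [badPairs, ih, Finset.card_filter, Finset.card_filter]
      simp only [length_cons, Nat.add_sub_cancel]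
      rw [Finset.sum_range_succ']
      simp only [getD_cons_succ, getD_cons_zero, zero_add, ite_not]
      omega

lemma badNum_eq_badPairs (p : List ℕ) : badNum p = badPairs (extList p) := by
  simp [badNum, badPairs_eq_card_filter, extList]

lemma badPairs_swap_add_two_le {P X B Y D : List ℕ} (hB : B ≠ []) (hY : Y ≠ [])
    (hPY : badLink P Y = 0) (hYB : badLink Y B = 0) (hPX : badLink P (X ++ B) = 1)
    (hXB : X ≠ [] → badLink X B = 1) (hBY : badLink B Y = 1) (hYD : badLink Y D = 1) :
    badPairs (P ++ Y ++ B ++ X ++ D) + 2 ≤ badPairs (P ++ X ++ B ++ Y ++ D) := by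
  have hXD : badLink X D ≤ badLink X B := by
    rcases eq_or_ne X [] with rfl | hX
    · simp
    · exact hXB hX ▸ badLink_le_one X D
  have hold : badPairs (P ++ X ++ B ++ Y ++ D) = badPairs P + badLink P (X ++ B) + badPairs X
      + badLink X B + badPairs B + badLink B Y + badPairs Y + badLink Y D + badPairs D := by
    have hXB_ne : X ++ B ≠ [] := append_ne_nil_of_right_ne_nil X hB
    simp only [append_assoc, badPairs_append, badLink_append_right _ hB, badLink_append_right _ hY]
    rw [← append_assoc X, badLink_append_right _ hXB_ne]
    ring
  have hnew : badPairs (P ++ Y ++ B ++ X ++ D) = badPairs P + badLink P Y + badPairs Y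
      + badLink Y B + badPairs B + badLink B (X ++ D) + badPairs X + badLink X D + badPairs D := by
    simp only [append_assoc, badPairs_append, badLink_append_right _ hY, badLink_append_right _ hB]
    ring
  have := badLink_le_one B (X ++ D)
  omega

lemma isBlockMove_of_ne_nil {B Y : List ℕ} (hB : B ≠ []) (hY : Y ≠ []) (A X C : List ℕ) :
    IsBlockMove (A ++ X ++ B ++ Y ++ C) (A ++ Y ++ B ++ X ++ C) := by
  rcases eq_or_ne X [] with rfl | hX
  · exact ⟨A, B, [], Y, C, hB, hY, by simp, by simp⟩
  · exact ⟨A, X, B, Y, C, hX, hY, rfl, rfl⟩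

lemma eq_range'_or_exists_gap {l : List ℕ} {m n : ℕ} (h : l ~ range' m n) :
    l = range' m n ∨
      ∃ k E G, E ≠ [] ∧ (∀ v ∈ E, m + k < v) ∧ l = range' m k ++ E ++ (m + k) :: G := by
  induction n generalizing m l with
  | zero => exact Or.inl (by simpa using h)
  | succ n ih =>
    have hnd : l.Nodup := h.nodup_iff.mpr nodup_range'
    rw [range'_succ] at h
    obtain _ | ⟨a, l⟩ := l
    · exact absurd h.length_eq (by simp)
    rcases eq_or_ne a m with rfl | ham
    · rcases ih h.cons_inv with rfl | ⟨k, E, G, hE, hlt, rfl⟩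
      · exact Or.inl (range'_succ ..).symm
      · refine Or.inr ⟨k + 1, E, G, hE, fun v hv => by have := hlt v hv; omega, ?_⟩
        simp [range'_succ, Nat.add_right_comm, Nat.add_assoc]
    · have hm : m ∈ l := by
        simpa [ham.symm] using h.symm.subset (mem_cons_self (a := m))
      obtain ⟨E, G, rfl⟩ := append_of_mem hm
      refine Or.inr ⟨0, a :: E, G, cons_ne_nil _ _, fun v hv => ?_, by simp⟩
      have hvm : v ≠ m := by
        rintro rfl
        rw [← cons_append, nodup_append] at hnd
        exact hnd.2.2 v hv v mem_cons_self rfl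
      have hv' : v ∈ m :: range' (m + 1) n := h.subset (by simp at hv ⊢; tauto)
      simp [mem_range'] at hv'
      omega

lemma exists_decomposition_of_ne_range' {p : List ℕ} (hp : IsPermList p)
    (h : p ≠ range' 1 p.length) :
    ∃ k w X B Y C, p = range' 1 k ++ X ++ (w + 1) :: B ++ Y ++ C ∧ Y.head? = some (k + 1) ∧
      Y.getLast? = some w ∧ ∀ v ∈ X ++ (w + 1) :: B, k + 1 < v ∧ w < v := by
  obtain ⟨k, E, G, hE, hEk, hpk⟩ := (eq_range'_or_exists_gap hp).resolve_left h
  obtain ⟨u, huE, humin⟩ := E.toFinset.exists_min_image id (by simpa using hE)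
  simp only [mem_toFinset, id] at huE humin
  obtain ⟨w, rfl⟩ : ∃ w, u = w + 1 := ⟨u - 1, by have := hEk _ huE; omega⟩
  have hwG : w ∈ (1 + k) :: G := by
    have hwp : w ∈ p := by
      have hwp := hp.subset (show w + 1 ∈ p by simp [hpk, huE])
      have := hEk _ huE
      rw [mem_range'_1] at hwp
      rw [hp.mem_iff, mem_range'_1]
      omega
    rw [hpk, mem_append, mem_append, mem_range'] at hwp
    rcases hwp with (⟨i, hi, rfl⟩ | hwE) | hwG
    · have := hEk _ huE; omega
    · have := humin _ hwE; omega
    · exact hwG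
  obtain ⟨s, C, hsC⟩ := append_of_mem hwG
  obtain ⟨X, B, rfl⟩ := append_of_mem huE
  refine ⟨k, w, X, B, s ++ [w], C, by simp [hpk, hsC], ?_, getLast?_concat,
    fun v hv => ⟨by have := hEk v hv; omega, by have := humin v hv; omega⟩⟩
  have := congrArg head? hsC
  simp only [head?_append, head?_cons] at this ⊢
  rw [← this, Nat.add_comm]

lemma badNum_swap_add_two_le {p X B Y C : List ℕ} {k w : ℕ} (hp : IsPermList p)
    (hpXBYC : p = range' 1 k ++ X ++ (w + 1) :: B ++ Y ++ C) (hYhead : Y.head? = some (k + 1))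
    (hYlast : Y.getLast? = some w) (hXB : ∀ v ∈ X ++ (w + 1) :: B, k + 1 < v ∧ w < v) :
    badNum (range' 1 k ++ Y ++ (w + 1) :: B ++ X ++ C) + 2 ≤ badNum p := by
  have hY : Y ≠ [] := fun h => by simp [h] at hYhead
  have hlen : (range' 1 k ++ Y ++ (w + 1) :: B ++ X ++ C).length = p.length := by
    simp [hpXBYC]; omega
  have hext : extList p = 0 :: range' 1 k ++ X ++ (w + 1) :: B ++ Y ++ (C ++ [p.length + 1]) := by
    simp only [extList]; nth_rw 1 [hpXBYC]; simp
  have hPlast : (0 :: range' 1 k).getLast? = some k := by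
    rw [show 0 :: range' 1 k = range' 0 (k + 1) by simp [range'_succ], getLast?_range']
    simp
  have hnd : p.Nodup := hp.nodup_iff.mpr nodup_range'
  have hwC : w + 1 ∉ C := fun hC => disjoint_of_nodup_append (hpXBYC ▸ hnd) (by simp) hC
  have hwn : w + 1 < p.length + 1 := by
    have := hp.subset (show w + 1 ∈ p by simp [hpXBYC])
    simp [mem_range'] at this
    omega
  have hXB_ne : X ++ (w + 1) :: B ≠ [] := by simp
  have hD : C ++ [p.length + 1] ≠ [] := by simp
  calc badNum (range' 1 k ++ Y ++ (w + 1) :: B ++ X ++ C) + 2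
      = badPairs (0 :: range' 1 k ++ Y ++ (w + 1) :: B ++ X ++ (C ++ [p.length + 1])) + 2 := by
        rw [badNum_eq_badPairs, extList, hlen]; simp
    _ ≤ badPairs (0 :: range' 1 k ++ X ++ (w + 1) :: B ++ Y ++ (C ++ [p.length + 1])) := by
      apply badPairs_swap_add_two_le (cons_ne_nil _ _) hY
      · exact badLink_eq_zero hPlast hYhead
      · exact badLink_eq_zero hYlast rfl
      · exact badLink_eq_one hPlast (head?_eq_some_head hXB_ne)
          (by have := (hXB _ (head_mem hXB_ne)).1; omega)
      · exact fun hX => badLink_eq_one (getLast?_eq_some_getLast hX) rfl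
          (by have := (hXB _ (mem_append_left _ (getLast_mem hX))).2; omega)
      · exact badLink_eq_one (getLast?_eq_some_getLast (cons_ne_nil _ _)) hYhead
          (by have := (hXB _ (mem_append_right _ (getLast_mem (cons_ne_nil _ _)))).1; omega)
      · refine badLink_eq_one hYlast (head?_eq_some_head hD) fun hd => ?_
        have := head_mem hD
        rw [← hd, mem_append, mem_singleton] at this
        exact this.elim hwC (by omega)
    _ = badNum p := by rw [badNum_eq_badPairs, hext]

/-- For any non-identity permutation there is a block move decreasing the
number of bad pairs by at least two. -/
theorem exists_good_blockMove (p : List ℕ) (hp : IsPermList p)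
    (h : p ≠ List.range' 1 p.length) :
    ∃ q, IsBlockMove p q ∧ badNum q + 2 ≤ badNum p := by
  obtain ⟨k, w, X, B, Y, C, hp_eq, hYhead, hYlast, hXB⟩ :=
    exists_decomposition_of_ne_range' hp h
  have hY : Y ≠ [] := fun hY => by simp [hY] at hYhead
  refine ⟨range' 1 k ++ Y ++ (w + 1) :: B ++ X ++ C, ?_,
    badNum_swap_add_two_le hp hp_eq hYhead hYlast hXB⟩
  rw [hp_eq]
  exact isBlockMove_of_ne_nil (cons_ne_nil _ _) hY _ _ _
end

section
/- At least max(⌈d(p)/2⌉, ⌈b(p)/4⌉) block moves are needed to sort a permutation p, where d(p) is the number of descents and b(p) the number of bad pairs of p. -/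
section AdjSum

variable {α : Type*} (f : α → α → ℕ)

def adjSum : List α → ℕ
  | a :: b :: t => f a b + adjSum (b :: t)
  | _ => 0

@[simp] lemma adjSum_nil : adjSum f [] = 0 := rfl

@[simp] lemma adjSum_singleton (a : α) : adjSum f [a] = 0 := rfl

@[simp] lemma adjSum_cons_cons (a b : α) (t : List α) :
    adjSum f (a :: b :: t) = f a b + adjSum f (b :: t) := rfl

lemma adjSum_append : ∀ {u v : List α} (hu : u ≠ []) (hv : v ≠ []),
    adjSum f (u ++ v) = adjSum f u + f (u.getLast hu) (v.head hv) + adjSum f v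
  | [_], _ :: _, _, _ => by simp
  | a :: b :: t, v, _, hv => by
      rw [List.cons_append, List.cons_append, adjSum_cons_cons, adjSum_cons_cons,
        ← List.cons_append, adjSum_append (List.cons_ne_nil b t) hv, List.getLast_cons_cons]
      ring

lemma adjSum_le_adjSum_append_left (u v : List α) : adjSum f u ≤ adjSum f (u ++ v) := by
  rcases eq_or_ne u [] with rfl | hu
  · simp
  rcases eq_or_ne v [] with rfl | hv
  · simp
  rw [adjSum_append f hu hv]
  omega

lemma adjSum_le_adjSum_append_right (u v : List α) : adjSum f v ≤ adjSum f (u ++ v) := by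
  rcases eq_or_ne u [] with rfl | hu
  · simp
  rcases eq_or_ne v [] with rfl | hv
  · simp
  rw [adjSum_append f hu hv]
  omega

lemma adjSum_le_of_isInfix {l₁ l₂ : List α} (h : l₁ <:+: l₂) : adjSum f l₁ ≤ adjSum f l₂ := by
  obtain ⟨s, t, rfl⟩ := h
  exact (adjSum_le_adjSum_append_right f s l₁).trans (adjSum_le_adjSum_append_left f _ t)

lemma adjSum_eq_zero_of_isChain {l : List α} (h : l.IsChain fun a b => f a b = 0) :
    adjSum f l = 0 := by
  induction h with
  | nil => rfl
  | singleton => rfl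
  | cons_cons hr _ ih => simp [hr, ih]

lemma card_filter_range_eq_adjSum (R : α → α → Prop) [DecidableRel R] (d : α) :
    ∀ l : List α, ((Finset.range (l.length - 1)).filter
        fun i => R (l.getD i d) (l.getD (i + 1) d)).card =
      adjSum (fun a b => if R a b then 1 else 0) l
  | [] => rfl
  | [_] => rfl
  | a :: b :: t => by
      rw [Finset.card_filter, adjSum_cons_cons, ← card_filter_range_eq_adjSum R d (b :: t),
        Finset.card_filter]
      simp only [List.length_cons, Nat.add_sub_cancel, Finset.sum_range_succ',
        List.getD_cons_succ, List.getD_cons_zero]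
      ring

end AdjSum

section SwapBound

variable {α : Type*} (f : α → α → ℕ)

/-- `k` bounds what swapping the blocks `X` and `Y` of `a X B Y c` (with `B` empty or not) loses
at the cut pairs; `x₁, x₂` (`b₁, b₂`, `y₁, y₂`) are the first and last entries of `X` (`B`, `Y`). -/
def SwapBound (k : ℕ) : Prop :=
  (∀ a x₁ x₂ y₁ y₂ c, f a x₁ + f x₂ y₁ + f y₂ c ≤ f a y₁ + f y₂ x₁ + f x₂ c + k) ∧
  ∀ a x₁ x₂ b₁ b₂ y₁ y₂ c,
    f a x₁ + f x₂ b₁ + f b₂ y₁ + f y₂ c ≤ f a y₁ + f y₂ b₁ + f b₂ x₁ + f x₂ c + k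

variable {f}

lemma adjSum_swap_le {k : ℕ} (hf : SwapBound f k) {A X B Y C : List α}
    (hA : A ≠ []) (hX : X ≠ []) (hY : Y ≠ []) (hC : C ≠ []) :
    adjSum f (A ++ X ++ B ++ Y ++ C) ≤ adjSum f (A ++ Y ++ B ++ X ++ C) + k := by
  rcases eq_or_ne B [] with rfl | hB
  · have := hf.1 (A.getLast hA) (X.head hX) (X.getLast hX) (Y.head hY) (Y.getLast hY)
      (C.head hC)
    simp [List.append_assoc, adjSum_append f, hA, hX, hY, hC]
    omega
  · have := hf.2 (A.getLast hA) (X.head hX) (X.getLast hX) (B.head hB) (B.getLast hB)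
      (Y.head hY) (Y.getLast hY) (C.head hC)
    simp [List.append_assoc, adjSum_append f, hA, hX, hB, hY, hC]
    omega

lemma swapBound_of_le_one (hf : ∀ a b, f a b ≤ 1) : SwapBound f 4 := by
  constructor
  · intro a x₁ x₂ y₁ y₂ c
    linarith [hf a x₁, hf x₂ y₁, hf y₂ c]
  · intro a x₁ x₂ b₁ b₂ y₁ y₂ c
    linarith [hf a x₁, hf x₂ b₁, hf b₂ y₁, hf y₂ c]

end SwapBound

lemma swapBound_descent : SwapBound (fun a b : ℕ => if b < a then 1 else 0) 2 := by
  constructor <;> intros <;> beta_reduce <;> split_ifs <;> omega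

lemma IsBlockMove.adjSum_le {f : ℕ → ℕ → ℕ} {k : ℕ} (hf : SwapBound f k) {p q : List ℕ}
    (h : IsBlockMove p q) (a c : ℕ) :
    adjSum f (a :: (p ++ [c])) ≤ adjSum f (a :: (q ++ [c])) + k := by
  obtain ⟨A, X, B, Y, C, hX, hY, rfl, rfl⟩ := h
  simpa using adjSum_swap_le hf (A := a :: A) (C := C ++ [c]) (B := B)
    (List.cons_ne_nil _ _) hX hY (by simp)

lemma SortableIn.le_add_mul {p : List ℕ} {k : ℕ} (h : SortableIn p k) {Φ : List ℕ → ℕ}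
    {c : ℕ} (hΦ : ∀ q r, IsBlockMove q r → Φ q ≤ Φ r + c) :
    Φ p ≤ Φ (List.range' 1 p.length) + c * k := by
  obtain ⟨m, hmk, g, rfl, hgm, hstep⟩ := h
  have hchain : ∀ j ≤ m, Φ (g 0) ≤ Φ (g j) + c * j := by
    intro j
    induction j with
    | zero => simp
    | succ j ih =>
        intro hj
        have := hΦ _ _ (hstep j hj)
        have := ih (by omega)
        rw [Nat.mul_succ]
        omega
  calc Φ (g 0) ≤ Φ (g m) + c * m := hchain m le_rfl
    _ ≤ Φ (List.range' 1 (g 0).length) + c * k := by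
      rw [hgm]; gcongr

lemma adjSum_pad_range'_eq_zero {f : ℕ → ℕ → ℕ} (hf : ∀ a, f a (a + 1) = 0) (n : ℕ) :
    adjSum f (0 :: (List.range' 1 n ++ [n + 1])) = 0 := by
  have hrange : 0 :: (List.range' 1 n ++ [n + 1]) = List.range' 0 (n + 2) := by
    rw [List.range'_succ, List.range'_concat]
    simp [Nat.add_comm]
  rw [hrange]
  exact adjSum_eq_zero_of_isChain f
    ((List.isChain_range' 0 (n + 2) 1).imp (by rintro a _ rfl; exact hf a))

lemma desNum_eq_adjSum (p : List ℕ) : desNum p = adjSum (fun a b => if b < a then 1 else 0) p :=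
  card_filter_range_eq_adjSum (fun a b => b < a) 0 p

lemma badNum_eq_adjSum (p : List ℕ) :
    badNum p = adjSum (fun a b => if a + 1 ≠ b then 1 else 0) (0 :: (p ++ [p.length + 1])) := by
  have h := card_filter_range_eq_adjSum (fun a b => a + 1 ≠ b) 0 (extList p)
  simp only [extList, List.length_cons, List.length_append, Nat.add_sub_cancel] at h
  exact h

theorem max_lower_bound_general (p : List ℕ) (k : ℕ)
    (h : SortableIn p k) :
    max ((desNum p + 1) / 2) ((badNum p + 3) / 4) ≤ k := by
  set pad := fun q : List ℕ => 0 :: (q ++ [p.length + 1])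
  have hd : desNum p ≤ 2 * k := calc
    desNum p = adjSum _ p := desNum_eq_adjSum p
    _ ≤ adjSum _ (pad p) := adjSum_le_of_isInfix _ (List.infix_append [0] p _)
    _ ≤ adjSum _ (pad (List.range' 1 p.length)) + 2 * k :=
      h.le_add_mul fun _ _ hqr => hqr.adjSum_le swapBound_descent 0 _
    _ = 2 * k := by rw [adjSum_pad_range'_eq_zero (by simp), zero_add]
  have hb : badNum p ≤ 4 * k := calc
    badNum p = adjSum _ (pad p) := badNum_eq_adjSum p
    _ ≤ adjSum _ (pad (List.range' 1 p.length)) + 4 * k :=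
      h.le_add_mul fun _ _ hqr =>
        hqr.adjSum_le (swapBound_of_le_one fun _ _ => by split_ifs <;> simp) 0 _
    _ = 4 * k := by rw [adjSum_pad_range'_eq_zero (by simp), zero_add]
  omega

/-- At least `max(⌈d(p)/2⌉, ⌈b(p)/4⌉)` block moves are needed to sort `p`. -/
theorem max_lower_bound (p : List ℕ) (hp : IsPermList p) (k : ℕ)
    (h : SortableIn p k) :
    max ((desNum p + 1) / 2) ((badNum p + 3) / 4) ≤ k :=
  max_lower_bound_general p k h
end

section
/- No block move decreases the number of bad pairs of a permutation by more than four. -/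
/-!
Count bad pairs in an arbitrary list: adjacent entries `x, y` with `x + 1 ≠ y`.
Concatenating two lists creates at most one new adjacent pair, so the count of `a ++ b` lies between `badCount a + badCount b` and one more.
Writing a block move as `U X B Y W ↦ U Y B X W`, the four junctions of the source contribute
at most four bad pairs beyond those inside the five pieces, while the target has at least those.
-/

def badCount : List ℕ → ℕ
  | x :: y :: t => (if x + 1 = y then 0 else 1) + badCount (y :: t)
  | _ => 0

theorem badCount_append_bounds (a b : List ℕ) :
    badCount a + badCount b ≤ badCount (a ++ b) ∧
      badCount (a ++ b) ≤ badCount a + badCount b + 1 := by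
  induction a with
  | nil => simp [badCount]
  | cons x t ih =>
    rcases t with _ | ⟨y, s⟩
    · rcases b with _ | ⟨y, s⟩
      · simp [badCount]
      · simp only [List.singleton_append, badCount]
        split <;> omega
    · simp only [List.cons_append, badCount] at ih ⊢
      split <;> omega

theorem badCount_swap_blocks_le (U X B Y W : List ℕ) :
    badCount (U ++ X ++ B ++ Y ++ W) ≤ badCount (U ++ Y ++ B ++ X ++ W) + 4 := by
  simp only [List.append_assoc]
  have u1 := (badCount_append_bounds U (X ++ (B ++ (Y ++ W)))).2
  have u2 := (badCount_append_bounds X (B ++ (Y ++ W))).2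
  have u3 := (badCount_append_bounds B (Y ++ W)).2
  have u4 := (badCount_append_bounds Y W).2
  have l1 := (badCount_append_bounds U (Y ++ (B ++ (X ++ W)))).1
  have l2 := (badCount_append_bounds Y (B ++ (X ++ W))).1
  have l3 := (badCount_append_bounds B (X ++ W)).1
  have l4 := (badCount_append_bounds X W).1
  omega

theorem card_filter_range_eq_badCount (L : List ℕ) :
    ((Finset.range (L.length - 1)).filter
      (fun i => L.getD i 0 + 1 ≠ L.getD (i+1) 0)).card = badCount L := by
  induction L with
  | nil => simp [badCount]
  | cons x t ih =>
    rcases t with _ | ⟨y, s⟩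
    · simp [badCount]
    · rw [Finset.card_filter] at ih ⊢
      rw [show (x :: y :: s).length - 1 = s.length + 1 by simp, Finset.sum_range_succ']
      simp only [List.getD_cons_succ, List.getD_cons_zero] at ih ⊢
      simp only [List.length_cons, Nat.add_sub_cancel] at ih
      rw [ih, badCount]
      split <;> simp_all [add_comm]

theorem badNum_eq_badCount_extList (p : List ℕ) : badNum p = badCount (extList p) := by
  rw [badNum, ← card_filter_range_eq_badCount]
  simp [extList]

theorem blockMove_badNum_general (p q : List ℕ)
    (h : IsBlockMove p q) : badNum p ≤ badNum q + 4 := by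
  obtain ⟨A, X, B, Y, C, -, -, rfl, rfl⟩ := h
  have hlen : (A ++ Y ++ B ++ X ++ C).length = (A ++ X ++ B ++ Y ++ C).length := by
    simp only [List.length_append]
    omega
  set W := C ++ [(A ++ X ++ B ++ Y ++ C).length + 1]
  have hp : extList (A ++ X ++ B ++ Y ++ C) = (0 :: A) ++ X ++ B ++ Y ++ W := by
    simp [extList, W]
  have hq : extList (A ++ Y ++ B ++ X ++ C) = (0 :: A) ++ Y ++ B ++ X ++ W := by
    rw [extList, hlen]
    simp [W]
  rw [badNum_eq_badCount_extList, badNum_eq_badCount_extList, hp, hq]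
  exact badCount_swap_blocks_le _ _ _ _ _

/-- No block move decreases the number of bad pairs by more than four. -/
theorem blockMove_badNum (p q : List ℕ) (hp : IsPermList p)
    (h : IsBlockMove p q) : badNum p ≤ badNum q + 4 :=
  blockMove_badNum_general p q h
end

section
/- If p is a permutation with p_1 = 2, then there exists a single block move that decreases the number of bad pairs of p by two, namely interchanging the block p_1 p_2 ... p_{i-1} with the single-entry block p_i = 1, where i is the position of the entry 1. -/
/-!
Write `p = X 1 Z` with `X = 2 X'`, and count bad pairs as adjacent pairs `(a, b)` with `b ≠ a + 1`
in the extended list. The move `0 X 1 Z (n+1) ↦ 0 1 X Z (n+1)` destroys the three bad pairs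
`(0, 2)`, `(x, 1)` and `(1, c)` (with `x` the last entry of `X` and `c` the entry after `1`;
`c ≠ 2` as `2` already occurs in `X`) and creates the good pairs `(0, 1)`, `(1, 2)` and the
single possibly bad pair `(x, c)`.
-/

def numBreaks : List ℕ → ℕ
  | a :: b :: l => (if a + 1 = b then 0 else 1) + numBreaks (b :: l)
  | _ => 0

theorem numBreaks_eq_card_filter (L : List ℕ) :
    numBreaks L = ((Finset.range (L.length - 1)).filter
      fun i => L.getD i 0 + 1 ≠ L.getD (i + 1) 0).card := by
  match L with
  | [] => rfl
  | [_] => rfl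
  | a :: b :: l =>
    rw [numBreaks, numBreaks_eq_card_filter (b :: l), Finset.card_filter, Finset.card_filter]
    simp [Finset.sum_range_succ' _ l.length, add_comm]

theorem badNum_eq_numBreaks (p : List ℕ) : badNum p = numBreaks (extList p) := by
  rw [badNum, numBreaks_eq_card_filter]
  simp [extList]

theorem numBreaks_append_cons (l : List ℕ) (b : ℕ) (m : List ℕ) :
    numBreaks (l ++ b :: m) = numBreaks (l ++ [b]) + numBreaks (b :: m) := by
  match l with
  | [] => simp [numBreaks]
  | [a] => simp [numBreaks]
  | a :: a' :: l =>
    simp only [List.cons_append, numBreaks]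
    rw [← List.cons_append, numBreaks_append_cons (a' :: l), List.cons_append, add_assoc]

theorem numBreaks_append_singleton_le {l : List ℕ} {d : ℕ} (hl : ∀ x ∈ l, x + 1 ≠ d) (c : ℕ) :
    numBreaks (l ++ [c]) ≤ numBreaks (l ++ [d]) := by
  match l with
  | [] => rfl
  | [a] =>
    simp only [List.singleton_append, numBreaks, if_neg (hl a (List.mem_singleton_self a))]
    split_ifs <;> simp
  | a :: a' :: l =>
    simp only [List.cons_append, numBreaks]
    rw [← List.cons_append, ← List.cons_append]
    gcongr
    exact numBreaks_append_singleton_le (fun x hx => hl x (List.mem_cons_of_mem a hx)) c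

theorem numBreaks_move_one_to_front {X W : List ℕ} (hX : 0 ∉ X) (hW : 2 ∉ W) (hW_ne : W ≠ []) :
    numBreaks (0 :: 1 :: 2 :: X ++ W) + 2 ≤ numBreaks (0 :: 2 :: X ++ 1 :: W) := by
  obtain ⟨c, W, rfl⟩ := List.exists_cons_of_ne_nil hW_ne
  have hc : 2 ≠ c := fun h => hW (h ▸ List.mem_cons_self)
  have hX1 : ∀ x ∈ 2 :: X, x + 1 ≠ 1 := by
    intro x hx hx1
    obtain rfl : x = 0 := by omega
    simp_all
  calc numBreaks (0 :: 1 :: 2 :: X ++ c :: W) + 2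
      = numBreaks (2 :: X ++ [c]) + numBreaks (c :: W) + 2 := by
        rw [← numBreaks_append_cons]; simp [numBreaks]
    _ ≤ numBreaks (2 :: X ++ [1]) + numBreaks (c :: W) + 2 := by
        gcongr; exact numBreaks_append_singleton_le hX1 c
    _ = 1 + (numBreaks (2 :: X ++ [1]) + numBreaks (1 :: c :: W)) := by
        simp [numBreaks, hc]; omega
    _ = numBreaks (0 :: 2 :: X ++ 1 :: c :: W) := by
        rw [← numBreaks_append_cons]; rfl

theorem take_idxOf_append_cons_drop {α : Type*} [BEq α] [LawfulBEq α] {l : List α} {a : α}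
    (h : a ∈ l) : l.take (l.idxOf a) ++ a :: l.drop (l.idxOf a + 1) = l := by
  have hlt := List.idxOf_lt_length_iff.mpr h
  conv_rhs => rw [← List.take_append_drop (l.idxOf a) l, List.drop_eq_getElem_cons hlt]
  rw [List.getElem_idxOf]

theorem first_entry_two_general (p : List ℕ) (hp : IsPermList p)
    (h1 : p.getD 0 0 = 2) (j : ℕ) (hj : p.idxOf 1 = j) :
    IsBlockMove p ([1] ++ p.take j ++ p.drop (j+1)) ∧
    badNum ([1] ++ p.take j ++ p.drop (j+1)) + 2 ≤ badNum p := by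
  have hnodup : p.Nodup := hp.nodup_iff.mpr List.nodup_range'
  have hmem : ∀ {a}, a ∈ p ↔ 1 ≤ a ∧ a < 1 + p.length := hp.mem_iff.trans List.mem_range'_1
  have hne : p ≠ [] := by rintro rfl; simp at h1
  have hsplit := take_idxOf_append_cons_drop (hmem.2 ⟨le_rfl, by simpa [List.length_pos_iff]⟩)
  rw [hj] at hsplit
  generalize p.take j = X, p.drop (j + 1) = Z at hsplit ⊢
  subst hsplit
  obtain ⟨X, rfl⟩ : ∃ X', X = 2 :: X' := by
    rcases X with _ | ⟨x, X⟩
    · simp at h1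
    · simp only [List.cons_append, List.getD_cons_zero] at h1
      exact ⟨X, h1 ▸ rfl⟩
  refine ⟨⟨[], 2 :: X, [], [1], Z, by simp, by simp, by simp, by simp⟩, ?_⟩
  have h0X : 0 ∉ X := fun h => by simpa using (hmem (a := 0)).1 (by simp [h])
  have h2Z : 2 ∉ Z := fun h => (List.nodup_cons.1 hnodup).1 (by simp [h])
  have hlen : ([1] ++ (2 :: X) ++ Z).length = (2 :: X ++ 1 :: Z).length := by simp +arith
  have key := numBreaks_move_one_to_front h0X
    (W := Z ++ [(2 :: X ++ 1 :: Z).length + 1]) (by simp [h2Z]) (by simp)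
  rw [badNum_eq_numBreaks, badNum_eq_numBreaks, extList, extList, hlen]
  simpa using key

/-- If `p₁ = 2`, the block move interchanging the initial block before the
entry `1` with the entry `1` decreases the number of bad pairs by two. -/
theorem first_entry_two (p : List ℕ) (hp : IsPermList p) (hn : 2 ≤ p.length)
    (h1 : p.getD 0 0 = 2) (j : ℕ) (hj : p.idxOf 1 = j) :
    IsBlockMove p ([1] ++ p.take j ++ p.drop (j+1)) ∧
    badNum ([1] ++ p.take j ++ p.drop (j+1)) + 2 ≤ badNum p :=
  first_entry_two_general p hp h1 j hj
end

section
/- If p is a permutation in which the entry 2 appears before the entry 1 (i.e., p^{-1}(2) < p^{-1}(1)), then there exists a block move that decreases the number of bad pairs of p by at least two. -/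
/-!
Write `p = P 2 M 1 C`; moving `1` to the front and swapping `P` with the block `2 M` gives
`q = 1 2 M P C`. In the extended word `0 P 2 M 1 C (n+1)` the pairs `(0, P)`, `(P, 2)`, `(M, 1)`
and `(1, C)` are all bad, because `1 ∉ P`, `0 ∉ M` and `2 ∉ C (n+1)`. In `0 1 2 M P C (n+1)`
they are replaced by the good pairs `(0, 1)`, `(1, 2)` and the two pairs `(M, P)`, `(P, C)`.
If `P` is empty, `(0, P)` and `(P, 2)` stand for the single bad pair `(0, 2)` and `(M, P)`,
`(P, C)` for the single pair `(M, C)`, so the count still drops by two.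
-/

/-- The number of bad pairs in the word `a :: l`. -/
def badFrom : ℕ → List ℕ → ℕ
  | _, [] => 0
  | a, b :: l => (if a + 1 = b then 0 else 1) + badFrom b l

@[simp]
lemma badFrom_nil (a : ℕ) : badFrom a [] = 0 := rfl

@[simp]
lemma badFrom_cons (a b : ℕ) (l : List ℕ) :
    badFrom a (b :: l) = (if a + 1 = b then 0 else 1) + badFrom b l := rfl

lemma badFrom_append (a : ℕ) (l m : List ℕ) :
    badFrom a (l ++ m) = badFrom a l + badFrom (l.getLastD a) m := by
  induction l generalizing a with
  | nil => simp
  | cons b l ih => simp only [List.cons_append, badFrom_cons, ih, List.getLastD_cons]; omega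

/-- Changing the left context `a` only affects the first pair, which is already bad for `b`. -/
lemma badFrom_le_of_succ_notMem {b : ℕ} {l : List ℕ} (hl : b + 1 ∉ l) (a : ℕ) :
    badFrom a l ≤ badFrom b l := by
  cases l with
  | nil => simp
  | cons x l =>
    have hx : b + 1 ≠ x := fun h => hl (h ▸ List.mem_cons_self)
    simp only [badFrom_cons, if_neg hx]
    split <;> omega

lemma badFrom_eq_card_filter (a : ℕ) (l : List ℕ) :
    badFrom a l = ((Finset.range l.length).filter
      (fun i => (a :: l).getD i 0 + 1 ≠ (a :: l).getD (i + 1) 0)).card := by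
  induction l generalizing a with
  | nil => simp
  | cons b l ih =>
    rw [badFrom_cons, ih b, Finset.card_filter, Finset.card_filter, List.length_cons,
      Finset.sum_range_succ']
    simp only [List.getD_cons_succ, List.getD_cons_zero, ne_eq, ite_not]
    omega

lemma badNum_eq_badFrom (p : List ℕ) : badNum p = badFrom 0 (p ++ [p.length + 1]) := by
  rw [badNum, badFrom_eq_card_filter, extList, List.length_append, List.length_singleton]

lemma badFrom_rotate_add_two_le {P M C : List ℕ} (hP : 1 ∉ P) (hM : 0 ∉ M) (hC : 2 ∉ C) :
    badFrom 0 (1 :: 2 :: (M ++ (P ++ C))) + 2 ≤ badFrom 0 (P ++ 2 :: (M ++ 1 :: C)) := by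
  have hPlast : P.getLastD 0 + 1 ≠ 2 := by
    have := List.getLastD_mem_cons (l := P) (a := 0)
    grind
  have hMlast : M.getLastD 2 + 1 ≠ 1 := by
    have := List.getLastD_mem_cons (l := M) (a := 2)
    grind
  have hPle := badFrom_le_of_succ_notMem (b := 0) hP (M.getLastD 2)
  have hCle := badFrom_le_of_succ_notMem (b := 1) hC (P.getLastD (M.getLastD 2))
  simp only [badFrom_append, badFrom_cons, if_neg hPlast, if_neg hMlast, zero_add, if_true]
  omega

lemma isBlockMove_append_append {P X Y C : List ℕ} (hX : X ≠ []) (hY : Y ≠ []) :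
    IsBlockMove (P ++ X ++ Y ++ C) (Y ++ X ++ P ++ C) := by
  rcases eq_or_ne P [] with rfl | hP
  · exact ⟨[], X, [], Y, C, hX, hY, by simp, by simp⟩
  · exact ⟨[], P, X, Y, C, hP, hY, by simp, by simp⟩

lemma List.exists_eq_append_cons_append_cons_of_idxOf_lt {α : Type*} [DecidableEq α]
    {l : List α} {a b : α} (hb : b ∈ l) (h : l.idxOf a < l.idxOf b) :
    ∃ P M C, l = P ++ a :: (M ++ b :: C) := by
  obtain ⟨L, C, rfl⟩ := List.append_of_mem hb
  have ha : a ∈ L := by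
    by_contra ha
    have := List.idxOf_le_length (a := b) (l := L)
    grind [List.idxOf_append_of_notMem, List.idxOf_append_of_mem]
  obtain ⟨P, M, rfl⟩ := List.append_of_mem ha
  exact ⟨P, M, C, by simp⟩

theorem two_before_one_general (p : List ℕ) (hp : IsPermList p)
    (h : p.idxOf 2 < p.idxOf 1) :
    ∃ q, IsBlockMove p q ∧ badNum q + 2 ≤ badNum p := by
  have hmem {a : ℕ} : a ∈ p ↔ 1 ≤ a ∧ a < 1 + p.length := hp.mem_iff.trans List.mem_range'_1
  have h2 : 2 ∈ p := List.idxOf_lt_length_iff.mp (h.trans_le List.idxOf_le_length)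
  have h1 : 1 ∈ p := hmem.2 ⟨le_rfl, by grind⟩
  have hlen : 2 ≤ p.length := by grind
  have h0 : 0 ∉ p := by grind
  have hnd : p.Nodup := hp.nodup_iff.mpr List.nodup_range'
  obtain ⟨P, M, C, rfl⟩ := List.exists_eq_append_cons_append_cons_of_idxOf_lt h1 h
  have hP : 1 ∉ P := by grind
  have hM : 0 ∉ M := by grind
  have hC : 2 ∉ C ++ [(P ++ 2 :: (M ++ 1 :: C)).length + 1] := by grind
  refine ⟨1 :: 2 :: (M ++ (P ++ C)), ?_, ?_⟩
  · simpa using isBlockMove_append_append (P := P) (C := C) (X := 2 :: M) (Y := [1])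
      (List.cons_ne_nil _ _) (List.cons_ne_nil _ _)
  · have hlen_swap : (1 :: 2 :: (M ++ (P ++ C))).length = (P ++ 2 :: (M ++ 1 :: C)).length := by
      simp only [List.length_cons, List.length_append]; omega
    rw [badNum_eq_badFrom, badNum_eq_badFrom, hlen_swap]
    simpa using badFrom_rotate_add_two_le hP hM hC

/-- If `2` precedes `1` in `p`, there is a block move decreasing the number
of bad pairs by at least two. -/
theorem two_before_one (p : List ℕ) (hp : IsPermList p) (hn : 2 ≤ p.length)
    (h : p.idxOf 2 < p.idxOf 1) :
    ∃ q, IsBlockMove p q ∧ badNum q + 2 ≤ badNum p :=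
  two_before_one_general p hp h
end
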